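/- If both the first zero μ̂₁(a) and the second zero μ̂₂(a) of τ̂' in (a,∞) exist, then μ̂₁(a) is a simple zero, μ̂₁(a) < μ̂₂(a), and σ̂ vanishes somewhere in (μ̂₁(a), μ̂₂(a)]. -/

import Mathlib

open Set Filter MeasureTheory intervalIntegral

/-- `T4 r q y = (r y'')' - q y'`. -/
noncomputable def T4 (r q y : ℝ → ℝ) : ℝ → ℝ :=
  fun x => deriv (fun s => r s * deriv (deriv y) s) x - q x * deriv y x

/-- `y` solves `(r y'')'' - (q y')' = p y`, written as `(Ty)' = p y`. -/
def IsSol4 (r p q y : ℝ → ℝ) : Prop :=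
  ∀ x, deriv (T4 r q y) x = p x * y x

/-- `σ̂ = u v' - v u'`. -/
noncomputable def sigmaHat (u v : ℝ → ℝ) : ℝ → ℝ :=
  fun x => u x * deriv v x - v x * deriv u x

/-- `τ̂ = u ⬝ Tv - v ⬝ Tu`. -/
noncomputable def tauHat (r q u v : ℝ → ℝ) : ℝ → ℝ :=
  fun x => u x * T4 r q v x - v x * T4 r q u x

/-- `ρ̂ = u₁ ⬝ Tv - v₁ ⬝ Tu` where `y₁ = r y''`. -/
noncomputable def rhoHat (r q u v : ℝ → ℝ) : ℝ → ℝ :=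
  fun x => (r x * deriv (deriv u) x) * T4 r q v x - (r x * deriv (deriv v) x) * T4 r q u x

/-- Initial conditions of the fundamental solutions `u`, `v`:
`u(a) = u₁(a) = Tu(a) = 0`, `u'(a) = 1`, and `v(a) = v'(a) = v₁(a) = 0`, `Tv(a) = 1`. -/
def FundIC (r q : ℝ → ℝ) (a : ℝ) (u v : ℝ → ℝ) : Prop :=
  u a = 0 ∧ r a * deriv (deriv u) a = 0 ∧ T4 r q u a = 0 ∧ deriv u a = 1 ∧
  v a = 0 ∧ deriv v a = 0 ∧ r a * deriv (deriv v) a = 0 ∧ T4 r q v a = 1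

/-!
`τ̂' = minor₂₄` equals `1` at `a` and has no zero in `(a, b)`, so `τ̂' > 0` and `τ̂ > 0` there.
Since `(v'/u')' = τ̂ / (r u'²) > 0` near `a`, the Cauchy mean value theorem makes `σ̂` positive
just right of `a`, and `σ̂` cannot return to zero before `b`: at a zero the Plücker relation
`r σ̂' τ̂' = τ̂² + ρ̂ σ̂` forces `σ̂' > 0`. At `b` the same relation gives `ρ̂ ≤ 0`, hence
`τ̂''(b) = ρ̂/r - p σ̂ < 0`. Finally, if `σ̂` had no zero in `(b, c]`, the quotient `τ̂'/σ̂`,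
whose derivative is `-(τ̂²/r + p σ̂²)/σ̂² < 0`, would vanish at both `b` and `c`.
-/
open Topology

theorem frequently_deriv_eq_zero_of_frequently_eq_zero {f : ℝ → ℝ} {x : ℝ} (hf : Continuous f)
    (hx : f x = 0) (h : ∃ᶠ y in 𝓝[≠] x, f y = 0) : ∃ᶠ y in 𝓝[≠] x, deriv f y = 0 := by
  rw [Metric.nhdsWithin_basis_ball.frequently_iff] at h ⊢
  intro ε hε
  obtain ⟨z, ⟨hzε, hzx⟩, hz⟩ := h ε hε
  rw [Metric.mem_ball, Real.dist_eq, abs_sub_lt_iff] at hzε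
  rcases lt_or_gt_of_ne hzx with hlt | hlt
  · obtain ⟨c, hc, hc0⟩ := exists_deriv_eq_zero hlt hf.continuousOn (hz.trans hx.symm)
    refine ⟨c, ⟨?_, hc.2.ne⟩, hc0⟩
    rw [Metric.mem_ball, Real.dist_eq, abs_sub_lt_iff]
    constructor <;> linarith [hc.1, hc.2]
  · obtain ⟨c, hc, hc0⟩ := exists_deriv_eq_zero hlt hf.continuousOn (hx.trans hz.symm)
    refine ⟨c, ⟨?_, hc.1.ne'⟩, hc0⟩
    rw [Metric.mem_ball, Real.dist_eq, abs_sub_lt_iff]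
    constructor <;> linarith [hc.1, hc.2]

theorem HasDerivAt.continuousAt_mul_of_eq_zero {f q : ℝ → ℝ} {x : ℝ} (hf : HasDerivAt f 0 x)
    (hfx : f x = 0) (hq : ContinuousAt q x) : HasDerivAt (fun y => q y * f y) 0 x := by
  rw [hasDerivAt_iff_isLittleO] at hf ⊢
  simp only [hfx, mul_zero, sub_zero, smul_zero] at hf ⊢
  simpa using (hq.tendsto.isBigO_one ℝ).mul_isLittleO hf

theorem hasDerivAt_of_eventually_hasDerivAt {f g : ℝ → ℝ} {x : ℝ}
    (hd : ∀ᶠ y in 𝓝[≠] x, HasDerivAt f (g y) y) (hf : ContinuousAt f x)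
    (hg : ContinuousAt g x) : HasDerivAt f (g x) x := by
  have hdiff : DifferentiableOn ℝ f {y | HasDerivAt f (g y) y} :=
    fun y hy => hy.differentiableAt.differentiableWithinAt
  have hlim : Tendsto (deriv f) (𝓝[≠] x) (𝓝 (g x)) :=
    (hg.tendsto.mono_left nhdsWithin_le_nhds).congr' (hd.mono fun y hy => hy.deriv.symm)
  have hlt : 𝓝[<] x ≤ 𝓝[≠] x := nhdsWithin_mono x fun y (hy : y < x) => hy.ne
  have hgt : 𝓝[>] x ≤ 𝓝[≠] x := nhdsWithin_mono x fun y (hy : x < y) => hy.ne'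
  have hleft := hasDerivWithinAt_Iic_of_tendsto_deriv hdiff hf.continuousWithinAt (hlt hd)
    (hlim.mono_left hlt)
  have hright := hasDerivWithinAt_Ici_of_tendsto_deriv hdiff hf.continuousWithinAt (hgt hd)
    (hlim.mono_left hgt)
  simpa using hleft.union hright

theorem HasDerivAt.eventually_pos_right {f : ℝ → ℝ} {f' x : ℝ} (hf : HasDerivAt f f' x)
    (hf' : 0 < f') (hfx : f x = 0) : ∀ᶠ y in 𝓝[>] x, 0 < f y := by
  filter_upwards [(hasDerivAt_iff_tendsto_slope_left_right.1 hf).2.eventually (lt_mem_nhds hf'),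
    self_mem_nhdsWithin] with y hs (hy : x < y)
  rw [slope_def_field, hfx, sub_zero] at hs
  exact (div_pos_iff_of_pos_right (sub_pos.2 hy)).1 hs

theorem HasDerivAt.eventually_neg_left {f : ℝ → ℝ} {f' x : ℝ} (hf : HasDerivAt f f' x)
    (hf' : 0 < f') (hfx : f x = 0) : ∀ᶠ y in 𝓝[<] x, f y < 0 := by
  filter_upwards [(hasDerivAt_iff_tendsto_slope_left_right.1 hf).1.eventually (lt_mem_nhds hf'),
    self_mem_nhdsWithin] with y hs (hy : y < x)
  rw [slope_def_field, hfx, sub_zero, div_pos_iff] at hs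
  rcases hs with h | h
  · linarith [h.2]
  · exact h.1

theorem pos_of_ne_zero_of_isPreconnected {f : ℝ → ℝ} {s : Set ℝ} (hs : IsPreconnected s)
    (hf : ContinuousOn f s) (hne : ∀ x ∈ s, f x ≠ 0) {x₀ : ℝ} (hx₀ : x₀ ∈ s) (h₀ : 0 < f x₀) :
    ∀ x ∈ s, 0 < f x := by
  intro x hx
  by_contra! hle
  obtain ⟨z, hz, hz0⟩ := hs.intermediate_value hx hx₀ hf ⟨hle, h₀.le⟩
  exact hne z hz hz0

/-- By continuous induction `f ≥ 0` on `[s, t]`; a zero with `f' > 0` would then have `f < 0`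
just to its left. -/
theorem pos_on_Icc_of_deriv_pos_at_zeros {f : ℝ → ℝ} {s t : ℝ} (hf : ContinuousOn f (Icc s t))
    (hs : 0 < f s) (hz : ∀ x ∈ Ioc s t, f x = 0 → 0 < deriv f x) : ∀ x ∈ Icc s t, 0 < f x := by
  have hz' : ∀ x ∈ Icc s t, f x = 0 → s < x ∧ HasDerivAt f (deriv f x) x := by
    intro x hx h0
    have hsx : s < x := hx.1.lt_of_ne (by rintro rfl; exact hs.ne' h0)
    exact ⟨hsx, (differentiableAt_of_deriv_ne_zero (hz x ⟨hsx, hx.2⟩ h0).ne').hasDerivAt⟩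
  have hnonneg : Icc s t ⊆ {x | 0 ≤ f x} := by
    refine IsClosed.Icc_subset_of_forall_mem_nhdsWithin ?_ hs.le ?_
    · rw [inter_comm]
      exact hf.preimage_isClosed_of_isClosed isClosed_Icc isClosed_Ici
    · rintro x ⟨hx0 : 0 ≤ f x, hxs, hxt⟩
      rcases hx0.eq_or_lt with h0 | hpos
      · obtain ⟨hsx, hd⟩ := hz' x ⟨hxs, hxt.le⟩ h0.symm
        exact (hd.eventually_pos_right (hz x ⟨hsx, hxt.le⟩ h0.symm) h0.symm).mono
          fun y hy => hy.le
      · have hIcc : Icc s t ∈ 𝓝[>] x := Icc_mem_nhdsGT_of_mem ⟨hxs, hxt⟩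
        exact nhdsWithin_le_of_mem hIcc
          (((hf x ⟨hxs, hxt.le⟩).eventually (lt_mem_nhds hpos)).mono fun y hy => hy.le)
  intro x hx
  refine (hnonneg hx).lt_of_ne fun h0 => ?_
  obtain ⟨hsx, hd⟩ := hz' x hx h0.symm
  obtain ⟨y, hy, hyx⟩ := ((hd.eventually_neg_left (hz x ⟨hsx, hx.2⟩ h0.symm) h0.symm).and
    (Ioo_mem_nhdsLT hsx)).exists
  exact hy.not_ge (hnonneg ⟨hyx.1.le, hyx.2.le.trans hx.2⟩)

theorem pos_on_Ioc_of_deriv_pos_at_zeros {f : ℝ → ℝ} {s t : ℝ} (hf : ContinuousOn f (Ioc s t))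
    (hs : ∀ᶠ x in 𝓝[>] s, 0 < f x) (hz : ∀ x ∈ Ioc s t, f x = 0 → 0 < deriv f x) :
    ∀ x ∈ Ioc s t, 0 < f x := by
  intro x hx
  obtain ⟨s', hs', hs'x⟩ := (hs.and (Ioo_mem_nhdsGT hx.1)).exists
  have hsub : Icc s' t ⊆ Ioc s t := Icc_subset_Ioc hs'x.1 le_rfl
  exact pos_on_Icc_of_deriv_pos_at_zeros (hf.mono hsub) hs'
    (fun y hy => hz y (hsub (Ioc_subset_Icc_self hy))) x ⟨hs'x.2.le, hx.2⟩

theorem wronskian_pos_of_strictMonoOn {u v : ℝ → ℝ} {a x : ℝ} (hax : a < x)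
    (hu : Differentiable ℝ u) (hv : Differentiable ℝ v) (hua : u a = 0) (hva : v a = 0)
    (hu' : ∀ t ∈ Icc a x, 0 < deriv u t)
    (hmono : StrictMonoOn (fun t => deriv v t / deriv u t) (Icc a x)) :
    0 < u x * deriv v x - v x * deriv u x := by
  obtain ⟨ξ, hξ, hcauchy⟩ := exists_ratio_hasDerivAt_eq_ratio_slope u (deriv u) hax
    hu.continuous.continuousOn (fun t _ => (hu t).hasDerivAt) v (deriv v)
    hv.continuous.continuousOn (fun t _ => (hv t).hasDerivAt)
  rw [hua, hva, sub_zero, sub_zero] at hcauchy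
  have hmem : x ∈ Icc a x := ⟨hax.le, le_rfl⟩
  have hux : 0 < u x := hua ▸ strictMonoOn_of_deriv_pos (convex_Icc a x)
    hu.continuous.continuousOn (fun t ht => hu' t (interior_subset ht)) ⟨le_rfl, hax.le⟩ hmem hax
  have hξ' := hu' ξ (Ioo_subset_Icc_self hξ)
  have hlt := hmono (Ioo_subset_Icc_self hξ) hmem hξ.2
  rw [div_lt_div_iff₀ hξ' (hu' x hmem)] at hlt
  have hkey : (u x * deriv v x - v x * deriv u x) * deriv u ξ
      = u x * (deriv v x * deriv u ξ - deriv v ξ * deriv u x) := by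
    linear_combination (-deriv u x) * hcauchy
  exact pos_of_mul_pos_left (hkey ▸ mul_pos hux (by linarith)) hξ'.le

theorem eventually_wronskian_pos {u v : ℝ → ℝ} {a : ℝ} (hu : ContDiff ℝ 2 u)
    (hv : ContDiff ℝ 2 v) (hua : u a = 0) (hva : v a = 0) (hu'a : 0 < deriv u a)
    (hW : ∀ᶠ x in 𝓝[>] a, 0 < deriv u x * deriv (deriv v) x - deriv v x * deriv (deriv u) x) :
    ∀ᶠ x in 𝓝[>] a, 0 < u x * deriv v x - v x * deriv u x := by
  have hpos : ∀ᶠ x in 𝓝 a, 0 < deriv u x :=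
    (hu.continuous_deriv (by norm_num)).continuousAt.eventually (lt_mem_nhds hu'a)
  obtain ⟨d, hd, hsub⟩ :=
    mem_nhdsGT_iff_exists_Ioo_subset.1 ((hpos.filter_mono nhdsWithin_le_nhds).and hW)
  filter_upwards [Ioo_mem_nhdsGT hd] with x hx
  have hu' : ∀ t ∈ Icc a x, 0 < deriv u t := by
    rintro t ⟨hat, htx⟩
    rcases hat.eq_or_lt with rfl | hat
    · exact hu'a
    · exact (hsub ⟨hat, htx.trans_lt hx.2⟩).1
  refine wronskian_pos_of_strictMonoOn hx.1 (hu.differentiable (by norm_num))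
    (hv.differentiable (by norm_num)) hua hva hu' ?_
  refine strictMonoOn_of_hasDerivWithinAt_pos (convex_Icc a x)
    ((hv.continuous_deriv (by norm_num)).continuousOn.div
      (hu.continuous_deriv (by norm_num)).continuousOn fun t ht => (hu' t ht).ne')
    (fun t ht => (((hv.differentiable_deriv_two t).hasDerivAt.div
      (hu.differentiable_deriv_two t).hasDerivAt
      (hu' t (interior_subset ht)).ne').hasDerivWithinAt)) ?_
  rw [interior_Icc]
  intro t ht
  have hWt := (hsub ⟨ht.1, ht.2.trans hx.2⟩).2
  exact div_pos (by linarith) (pow_pos (hu' t (Ioo_subset_Icc_self ht)) 2)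

theorem eq_of_hasDerivAt_eq {f g f' : ℝ → ℝ} {a b : ℝ} (hab : a ≤ b)
    (hf : ContinuousOn f (Icc a b)) (hg : ContinuousOn g (Icc a b))
    (hf' : ∀ x ∈ Ioo a b, HasDerivAt f (f' x) x) (hg' : ∀ x ∈ Ioo a b, HasDerivAt g (f' x) x)
    (ha : f a = g a) : f b = g b := by
  rcases hab.eq_or_lt with rfl | hab
  · exact ha
  obtain ⟨c, -, hc⟩ := exists_hasDerivAt_eq_slope (f - g) (fun _ => 0) hab
    (hf.sub hg) fun x hx => by simpa only [sub_self] using (hf' x hx).sub (hg' x hx)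
  rw [eq_comm, div_eq_zero_iff, Pi.sub_apply, Pi.sub_apply, sub_eq_zero, sub_eq_zero] at hc
  exact hc.elim (fun h => by linarith) fun h => by linarith

theorem exists_zero_Ioc_of_plucker {σ σ' τ ρ w r p : ℝ → ℝ} {b c : ℝ} (hbc : b < c)
    (hσ : ∀ x ∈ Icc b c, HasDerivAt σ (σ' x) x)
    (hw : ∀ x ∈ Icc b c, HasDerivAt w (ρ x / r x - p x * σ x) x)
    (hid : ∀ x ∈ Icc b c, r x * σ' x * w x = τ x ^ 2 + ρ x * σ x)
    (hr : ∀ x ∈ Icc b c, 0 < r x) (hp : ∀ x ∈ Icc b c, 0 < p x)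
    (hσb : σ b ≠ 0) (hwb : w b = 0) (hwc : w c = 0) : ∃ x ∈ Ioc b c, σ x = 0 := by
  by_contra! hne
  have hσne : ∀ x ∈ Icc b c, σ x ≠ 0 := fun x hx =>
    hx.1.eq_or_lt.elim (fun h => h ▸ hσb) fun h => hne x ⟨h, hx.2⟩
  -- `(w / σ)' = -(τ² / r + p σ²) / σ² < 0` contradicts Rolle's theorem for `w / σ` on `[b, c]`
  obtain ⟨ξ, hξ, hzero⟩ := exists_hasDerivAt_eq_zero hbc
    (ContinuousOn.div (fun x hx => (hw x hx).continuousAt.continuousWithinAt)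
      (fun x hx => (hσ x hx).continuousAt.continuousWithinAt) hσne)
    (by simp only [Pi.div_apply, hwb, hwc, zero_div])
    fun x hx => (hw x (Ioo_subset_Icc_self hx)).div (hσ x (Ioo_subset_Icc_self hx))
      (hσne x (Ioo_subset_Icc_self hx))
  have hξ := Ioo_subset_Icc_self hξ
  have hrξ := hr ξ hξ
  rw [div_eq_zero_iff, or_iff_left (pow_ne_zero 2 (hσne ξ hξ))] at hzero
  have hnum : r ξ * ((ρ ξ / r ξ - p ξ * σ ξ) * σ ξ - w ξ * σ' ξ)
      = -(τ ξ ^ 2 + p ξ * r ξ * σ ξ ^ 2) := by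
    field_simp
    linear_combination -hid ξ hξ
  rw [hzero, mul_zero] at hnum
  nlinarith [mul_pos (mul_pos (hp ξ hξ) hrξ) (pow_two_pos_of_ne_zero (hσne ξ hξ)), sq_nonneg (τ ξ)]

theorem pos_on_Ioc_of_plucker {σ σ' τ ρ w r : ℝ → ℝ} {a b : ℝ}
    (hσ : ∀ x ∈ Ioc a b, HasDerivAt σ (σ' x) x) (hσa : ∀ᶠ x in 𝓝[>] a, 0 < σ x)
    (hid : ∀ x ∈ Ioc a b, r x * σ' x * w x = τ x ^ 2 + ρ x * σ x)
    (hr : ∀ x ∈ Ioc a b, 0 < r x) (hτ : ∀ x ∈ Ioc a b, τ x ≠ 0) (hw : ∀ x ∈ Ioc a b, 0 ≤ w x) :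
    ∀ x ∈ Ioc a b, 0 < σ x := by
  refine pos_on_Ioc_of_deriv_pos_at_zeros (fun x hx => (hσ x hx).continuousAt.continuousWithinAt)
    hσa fun x hx h0 => ?_
  have hsq : 0 < r x * (σ' x * w x) := by
    rw [← mul_assoc, hid x hx, h0, mul_zero, add_zero]
    exact pow_two_pos_of_ne_zero (hτ x hx)
  rw [(hσ x hx).deriv]
  exact pos_of_mul_pos_left (pos_of_mul_pos_right hsq (hr x hx).le) (hw x hx)

section FourthOrder

variable {r p q u v y : ℝ → ℝ} {x : ℝ}

theorem continuous_T4 (hq : Continuous q) (hy : ContDiff ℝ 1 y)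
    (hry : ContDiff ℝ 1 (fun x => r x * deriv (deriv y) x)) : Continuous (T4 r q y) :=
  hry.continuous_deriv_one.sub (hq.mul hy.continuous_deriv_one)

theorem hasDerivAt_mul_deriv_deriv (hry : DifferentiableAt ℝ (fun x => r x * deriv (deriv y) x) x) :
    HasDerivAt (fun x => r x * deriv (deriv y) x) (T4 r q y x + q x * deriv y x) x := by
  refine hry.hasDerivAt.congr_deriv ?_
  simp only [T4, sub_add_cancel]

/-- `IsSol4` only constrains `deriv (T4 r q y)`, a junk value where `T4 r q y` is not
differentiable. Where `p y ≠ 0` that value is not junk; at an isolated zero of `y` the derivative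
extends continuously from both sides; and at an accumulation point of zeros `y' = y'' = 0`, so
that `q y'` is differentiable although `q` is only continuous. -/
theorem hasDerivAt_T4 (hp : Continuous p) (hq : Continuous q) (hy : ContDiff ℝ 2 y)
    (hry : ContDiff ℝ 2 (fun x => r x * deriv (deriv y) x)) (hsol : IsSol4 r p q y)
    (hpx : ∀ᶠ t in 𝓝 x, p t ≠ 0) : HasDerivAt (T4 r q y) (p x * y x) x := by
  have hne : ∀ t, p t ≠ 0 → y t ≠ 0 → HasDerivAt (T4 r q y) (p t * y t) t := fun t hpt hyt =>
    hsol t ▸ (differentiableAt_of_deriv_ne_zero (hsol t ▸ mul_ne_zero hpt hyt)).hasDerivAt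
  by_cases hyx : y x = 0
  swap
  · exact hne x hpx.self_of_nhds hyx
  by_cases hacc : ∃ᶠ t in 𝓝[≠] x, y t = 0
  · have h1 : deriv y x = 0 := deriv_zero_of_frequently_const hacc
    have h2 : deriv (deriv y) x = 0 := deriv_zero_of_frequently_const
      (frequently_deriv_eq_zero_of_frequently_eq_zero hy.continuous hyx hacc)
    have hqy : HasDerivAt (fun t => q t * deriv y t) 0 x :=
      (h2 ▸ (hy.differentiable_deriv_two x).hasDerivAt).continuousAt_mul_of_eq_zero h1
        hq.continuousAt
    rw [← hsol x]
    exact ((hry.differentiable_deriv_two x).sub hqy.differentiableAt).hasDerivAt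
  · rw [not_frequently] at hacc
    exact hasDerivAt_of_eventually_hasDerivAt
      (((hpx.filter_mono nhdsWithin_le_nhds).and hacc).mono fun t ht => hne t ht.1 ht.2)
      (continuous_T4 hq (hy.of_le (by norm_num)) (hry.of_le (by norm_num))).continuousAt
      (hp.mul hy.continuous).continuousAt

/-- With `y₁ = r y''`, the vectors `(u, u', u₁, Tu)` and `(v, v', v₁, Tv)` have the `2 × 2`
minors `σ̂ = minor₁₂`, `τ̂ = minor₁₄`, `ρ̂ = minor₃₄` and the following three. -/
noncomputable def minor13 (r u v : ℝ → ℝ) (x : ℝ) : ℝ :=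
  u x * (r x * deriv (deriv v) x) - v x * (r x * deriv (deriv u) x)

noncomputable def minor23 (r u v : ℝ → ℝ) (x : ℝ) : ℝ :=
  deriv u x * (r x * deriv (deriv v) x) - deriv v x * (r x * deriv (deriv u) x)

noncomputable def minor24 (r q u v : ℝ → ℝ) (x : ℝ) : ℝ :=
  deriv u x * T4 r q v x - deriv v x * T4 r q u x

theorem minor13_mul_minor24 :
    minor13 r u v x * minor24 r q u v x
      = sigmaHat u v x * rhoHat r q u v x + tauHat r q u v x * minor23 r u v x := by
  simp only [minor13, minor24, minor23, sigmaHat, rhoHat, tauHat]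
  ring

theorem hasDerivAt_sigmaHat (hu : ContDiff ℝ 2 u) (hv : ContDiff ℝ 2 v) (hr : r x ≠ 0) :
    HasDerivAt (sigmaHat u v) (minor13 r u v x / r x) x := by
  refine (((hu.differentiable (by norm_num) x).hasDerivAt.mul
    (hv.differentiable_deriv_two x).hasDerivAt).sub
    ((hv.differentiable (by norm_num) x).hasDerivAt.mul
    (hu.differentiable_deriv_two x).hasDerivAt)).congr_deriv ?_
  simp only [minor13]
  field_simp
  ring

theorem hasDerivAt_tauHat (hu : DifferentiableAt ℝ u x) (hv : DifferentiableAt ℝ v x)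
    (hTu : HasDerivAt (T4 r q u) (p x * u x) x) (hTv : HasDerivAt (T4 r q v) (p x * v x) x) :
    HasDerivAt (tauHat r q u v) (minor24 r q u v x) x := by
  refine ((hu.hasDerivAt.mul hTv).sub (hv.hasDerivAt.mul hTu)).congr_deriv ?_
  simp only [minor24]
  ring

theorem hasDerivAt_minor23 (hu : ContDiff ℝ 2 u) (hv : ContDiff ℝ 2 v)
    (hru : DifferentiableAt ℝ (fun x => r x * deriv (deriv u) x) x)
    (hrv : DifferentiableAt ℝ (fun x => r x * deriv (deriv v) x) x) :
    HasDerivAt (minor23 r u v) (minor24 r q u v x) x := by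
  refine (((hu.differentiable_deriv_two x).hasDerivAt.mul
    (hasDerivAt_mul_deriv_deriv (q := q) hrv)).sub
    ((hv.differentiable_deriv_two x).hasDerivAt.mul
    (hasDerivAt_mul_deriv_deriv (q := q) hru))).congr_deriv ?_
  simp only [minor24]
  ring

theorem hasDerivAt_minor24 (hu : ContDiff ℝ 2 u) (hv : ContDiff ℝ 2 v)
    (hTu : HasDerivAt (T4 r q u) (p x * u x) x) (hTv : HasDerivAt (T4 r q v) (p x * v x) x)
    (hr : r x ≠ 0) :
    HasDerivAt (minor24 r q u v) (rhoHat r q u v x / r x - p x * sigmaHat u v x) x := by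
  refine (((hu.differentiable_deriv_two x).hasDerivAt.mul hTv).sub
    ((hv.differentiable_deriv_two x).hasDerivAt.mul hTu)).congr_deriv ?_
  simp only [rhoHat, sigmaHat]
  field_simp
  ring

theorem continuous_tauHat (hq : Continuous q) (hu : ContDiff ℝ 1 u) (hv : ContDiff ℝ 1 v)
    (hru : ContDiff ℝ 1 (fun x => r x * deriv (deriv u) x))
    (hrv : ContDiff ℝ 1 (fun x => r x * deriv (deriv v) x)) : Continuous (tauHat r q u v) :=
  (hu.continuous.mul (continuous_T4 hq hv hrv)).sub (hv.continuous.mul (continuous_T4 hq hu hru))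

theorem continuous_minor23 (hu : ContDiff ℝ 1 u) (hv : ContDiff ℝ 1 v)
    (hru : Continuous (fun x => r x * deriv (deriv u) x))
    (hrv : Continuous (fun x => r x * deriv (deriv v) x)) : Continuous (minor23 r u v) :=
  (hu.continuous_deriv_one.mul hrv).sub (hv.continuous_deriv_one.mul hru)

theorem continuous_minor24 (hq : Continuous q) (hu : ContDiff ℝ 1 u) (hv : ContDiff ℝ 1 v)
    (hru : ContDiff ℝ 1 (fun x => r x * deriv (deriv u) x))
    (hrv : ContDiff ℝ 1 (fun x => r x * deriv (deriv v) x)) : Continuous (minor24 r q u v) :=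
  (hu.continuous_deriv_one.mul (continuous_T4 hq hv hrv)).sub
    (hv.continuous_deriv_one.mul (continuous_T4 hq hu hru))

end FourthOrder

structure FundamentalPair (a : ℝ) (r p q u v : ℝ → ℝ) : Prop where
  continuous_p : Continuous p
  continuous_q : Continuous q
  r_pos : ∀ x ∈ Ici a, 0 < r x
  p_pos : ∀ x ∈ Ici a, 0 < p x
  contDiff_u : ContDiff ℝ 2 u
  contDiff_v : ContDiff ℝ 2 v
  contDiff_ru : ContDiff ℝ 2 (fun x => r x * deriv (deriv u) x)
  contDiff_rv : ContDiff ℝ 2 (fun x => r x * deriv (deriv v) x)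
  isSol4_u : IsSol4 r p q u
  isSol4_v : IsSol4 r p q v
  fundIC : FundIC r q a u v

namespace FundamentalPair

variable {a x : ℝ} {r p q u v : ℝ → ℝ}

theorem hasDerivAt_T4 (h : FundamentalPair a r p q u v) (hx : a < x) :
    HasDerivAt (T4 r q u) (p x * u x) x ∧ HasDerivAt (T4 r q v) (p x * v x) x := by
  have hp : ∀ᶠ t in 𝓝 x, p t ≠ 0 :=
    eventually_of_mem (isOpen_Ioi.mem_nhds hx) fun t ht => (h.p_pos t (Ioi_subset_Ici_self ht)).ne'
  exact ⟨_root_.hasDerivAt_T4 h.continuous_p h.continuous_q h.contDiff_u h.contDiff_ru h.isSol4_u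
    hp, _root_.hasDerivAt_T4 h.continuous_p h.continuous_q h.contDiff_v h.contDiff_rv h.isSol4_v hp⟩

theorem hasDerivAt_tauHat (h : FundamentalPair a r p q u v) (hx : a < x) :
    HasDerivAt (tauHat r q u v) (minor24 r q u v x) x :=
  _root_.hasDerivAt_tauHat (h.contDiff_u.differentiable (by norm_num) x)
    (h.contDiff_v.differentiable (by norm_num) x) (h.hasDerivAt_T4 hx).1 (h.hasDerivAt_T4 hx).2

theorem hasDerivAt_minor24 (h : FundamentalPair a r p q u v) (hx : a < x) :
    HasDerivAt (minor24 r q u v) (rhoHat r q u v x / r x - p x * sigmaHat u v x) x :=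
  _root_.hasDerivAt_minor24 h.contDiff_u h.contDiff_v (h.hasDerivAt_T4 hx).1
    (h.hasDerivAt_T4 hx).2 (h.r_pos x hx.le).ne'

theorem hasDerivAt_sigmaHat (h : FundamentalPair a r p q u v) (hx : a < x) :
    HasDerivAt (sigmaHat u v) (minor13 r u v x / r x) x :=
  _root_.hasDerivAt_sigmaHat h.contDiff_u h.contDiff_v (h.r_pos x hx.le).ne'

theorem continuous_tauHat (h : FundamentalPair a r p q u v) : Continuous (tauHat r q u v) :=
  _root_.continuous_tauHat h.continuous_q (h.contDiff_u.of_le (by norm_num))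
    (h.contDiff_v.of_le (by norm_num)) (h.contDiff_ru.of_le (by norm_num))
    (h.contDiff_rv.of_le (by norm_num))

theorem minor23_eq_tauHat (h : FundamentalPair a r p q u v) (hx : a ≤ x) :
    minor23 r u v x = tauHat r q u v x := by
  obtain ⟨hua, hu1a, -, -, hva, hv'a, hv1a, -⟩ := h.fundIC
  refine eq_of_hasDerivAt_eq hx (continuous_minor23 (h.contDiff_u.of_le (by norm_num))
      (h.contDiff_v.of_le (by norm_num)) h.contDiff_ru.continuous h.contDiff_rv.continuous).continuousOn
    h.continuous_tauHat.continuousOn (fun t _ => hasDerivAt_minor23 h.contDiff_u h.contDiff_v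
      (h.contDiff_ru.differentiable (by norm_num) t) (h.contDiff_rv.differentiable (by norm_num) t))
    (fun t ht => h.hasDerivAt_tauHat ht.1) ?_
  simp only [minor23, tauHat, hua, hva, hu1a, hv1a, hv'a, mul_zero, zero_mul, sub_zero]

theorem plucker (h : FundamentalPair a r p q u v) (hx : a < x) :
    r x * (minor13 r u v x / r x) * minor24 r q u v x
      = tauHat r q u v x ^ 2 + rhoHat r q u v x * sigmaHat u v x := by
  rw [mul_div_cancel₀ _ (h.r_pos x hx.le).ne', minor13_mul_minor24, h.minor23_eq_tauHat hx.le]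
  ring

theorem minor24_pos (h : FundamentalPair a r p q u v) {b : ℝ} (hb : a < b)
    (hne : ∀ x ∈ Ioo a b, minor24 r q u v x ≠ 0) : ∀ x ∈ Ico a b, 0 < minor24 r q u v x := by
  obtain ⟨-, -, hTua, hu'a, -, hv'a, -, hTva⟩ := h.fundIC
  have hwa : minor24 r q u v a = 1 := by simp [minor24, hu'a, hv'a, hTva]
  refine pos_of_ne_zero_of_isPreconnected isPreconnected_Ico
    (continuous_minor24 h.continuous_q (h.contDiff_u.of_le (by norm_num))
      (h.contDiff_v.of_le (by norm_num)) (h.contDiff_ru.of_le (by norm_num))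
      (h.contDiff_rv.of_le (by norm_num))).continuousOn
    (fun x hx => ?_) (left_mem_Ico.2 hb) (hwa ▸ one_pos)
  rcases hx.1.eq_or_lt with rfl | hax
  · exact hwa ▸ one_ne_zero
  · exact hne x ⟨hax, hx.2⟩

theorem tauHat_pos (h : FundamentalPair a r p q u v) {b : ℝ}
    (hw : ∀ x ∈ Ioo a b, 0 < minor24 r q u v x) : ∀ x ∈ Ioc a b, 0 < tauHat r q u v x := by
  obtain ⟨hua, -, -, -, hva, -, -, -⟩ := h.fundIC
  have hτa : tauHat r q u v a = 0 := by simp [tauHat, hua, hva]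
  intro x hx
  refine hτa ▸ strictMonoOn_of_hasDerivWithinAt_pos (f' := minor24 r q u v) (convex_Icc a b)
    h.continuous_tauHat.continuousOn (fun t ht => ?_) (fun t ht => ?_)
    (left_mem_Icc.2 (hx.1.trans_le hx.2).le) (Ioc_subset_Icc_self hx) hx.1
  all_goals rw [interior_Icc] at ht
  · exact (h.hasDerivAt_tauHat ht.1).hasDerivWithinAt
  · exact hw t ht

/-- Near `a` the sign of `σ̂` is read off from `τ̂ = r (u' v'' - v' u'')`. -/
theorem eventually_sigmaHat_pos (h : FundamentalPair a r p q u v)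
    (hτ : ∀ᶠ x in 𝓝[>] a, 0 < tauHat r q u v x) : ∀ᶠ x in 𝓝[>] a, 0 < sigmaHat u v x := by
  obtain ⟨hua, -, -, hu'a, hva, -, -, -⟩ := h.fundIC
  refine eventually_wronskian_pos h.contDiff_u h.contDiff_v hua hva (hu'a ▸ one_pos) ?_
  filter_upwards [hτ, self_mem_nhdsWithin] with x hτx (hx : a < x)
  have hrx := h.r_pos x hx.le
  have hW : deriv u x * deriv (deriv v) x - deriv v x * deriv (deriv u) x
      = tauHat r q u v x / r x := by
    rw [← h.minor23_eq_tauHat hx.le, minor23]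
    field_simp
  exact hW ▸ div_pos hτx hrx

theorem deriv_deriv_tauHat_neg (h : FundamentalPair a r p q u v) {b : ℝ} (hb : a < b)
    (hwb : minor24 r q u v b = 0) (hσb : 0 < sigmaHat u v b) :
    deriv (deriv (tauHat r q u v)) b < 0 := by
  have hev : deriv (tauHat r q u v) =ᶠ[𝓝 b] minor24 r q u v :=
    eventually_of_mem (isOpen_Ioi.mem_nhds hb) fun x hx => (h.hasDerivAt_tauHat hx).deriv
  have hρb : rhoHat r q u v b ≤ 0 := by
    have hid := h.plucker hb
    rw [hwb, mul_zero] at hid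
    nlinarith [sq_nonneg (tauHat r q u v b)]
  rw [hev.deriv_eq, (h.hasDerivAt_minor24 hb).deriv, sub_neg]
  exact (div_nonpos_of_nonpos_of_nonneg hρb (h.r_pos b hb.le).le).trans_lt
    (mul_pos (h.p_pos b hb.le) hσb)

end FundamentalPair

theorem sigma_vanishes_between_focal_points_general
    (a b c : ℝ) (r p q u v : ℝ → ℝ)
    (hpc : Continuous p) (hqc : Continuous q)
    (hrpos : ∀ x ∈ Ici a, 0 < r x) (hppos : ∀ x ∈ Ici a, 0 < p x)
    (hu : ContDiff ℝ 4 u) (hv : ContDiff ℝ 4 v)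
    (hru : ContDiff ℝ 2 (fun x => r x * deriv (deriv u) x))
    (hrv : ContDiff ℝ 2 (fun x => r x * deriv (deriv v) x))
    (husol : IsSol4 r p q u) (hvsol : IsSol4 r p q v)
    (hic : FundIC r q a u v)
    (hb : a < b) (hbz : deriv (tauHat r q u v) b = 0)
    (hbmin : ∀ x ∈ Ioo a b, deriv (tauHat r q u v) x ≠ 0)
    (hc : a < c) (hcz : deriv (tauHat r q u v) c = 0) (hcb : c ≠ b) :
    deriv (deriv (tauHat r q u v)) b ≠ 0 ∧ b < c ∧
    ∃ x ∈ Ioc b c, sigmaHat u v x = 0 := by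
  have h : FundamentalPair a r p q u v := ⟨hpc, hqc, hrpos, hppos, hu.of_le (by norm_num),
    hv.of_le (by norm_num), hru, hrv, husol, hvsol, hic⟩
  have hτ' := fun x (hx : a < x) => (h.hasDerivAt_tauHat hx).deriv
  have hbc : b < c := hcb.lt_or_gt.resolve_left fun hcb => hbmin c ⟨hc, hcb⟩ hcz
  have hwb : minor24 r q u v b = 0 := hτ' b hb ▸ hbz
  have hw_pos := h.minor24_pos hb fun x hx => hτ' x hx.1 ▸ hbmin x hx
  have hτ_pos := h.tauHat_pos fun x hx => hw_pos x (Ioo_subset_Ico_self hx)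
  have hσ_pos : ∀ x ∈ Ioc a b, 0 < sigmaHat u v x :=
    pos_on_Ioc_of_plucker (fun x hx => h.hasDerivAt_sigmaHat hx.1)
      (h.eventually_sigmaHat_pos (eventually_of_mem (Ioo_mem_nhdsGT hb)
        fun x hx => hτ_pos x (Ioo_subset_Ioc_self hx)))
      (fun x hx => h.plucker hx.1) (fun x hx => hrpos x hx.1.le) (fun x hx => (hτ_pos x hx).ne')
      fun x hx => hx.2.eq_or_lt.elim (fun hxb => hxb ▸ hwb.ge)
        fun hxb => (hw_pos x ⟨hx.1.le, hxb⟩).le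
  have hσb := hσ_pos b ⟨hb, le_rfl⟩
  have hb' : ∀ x ∈ Icc b c, a < x := fun x hx => hb.trans_le hx.1
  refine ⟨(h.deriv_deriv_tauHat_neg hb hwb hσb).ne, hbc, ?_⟩
  exact exists_zero_Ioc_of_plucker hbc (fun x hx => h.hasDerivAt_sigmaHat (hb' x hx))
    (fun x hx => h.hasDerivAt_minor24 (hb' x hx)) (fun x hx => h.plucker (hb' x hx))
    (fun x hx => hrpos x (hb' x hx).le) (fun x hx => hppos x (hb' x hx).le) hσb.ne' hwb
    (hτ' c hc ▸ hcz)

/-- If both the first zero `μ̂₁(a) = b` and the second zero `μ̂₂(a) = c` of `τ̂'` in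
`(a, ∞)` exist, then `μ̂₁(a)` is a simple zero, `μ̂₁(a) < μ̂₂(a)`, and `σ̂` vanishes
somewhere in `(μ̂₁(a), μ̂₂(a)]`. -/
theorem sigma_vanishes_between_focal_points
    (a b c : ℝ) (r p q u v : ℝ → ℝ)
    (hrc : Continuous r) (hpc : Continuous p) (hqc : Continuous q)
    (hrpos : ∀ x ∈ Ici a, 0 < r x) (hppos : ∀ x ∈ Ici a, 0 < p x)
    (hu : ContDiff ℝ 4 u) (hv : ContDiff ℝ 4 v)
    (hru : ContDiff ℝ 2 (fun x => r x * deriv (deriv u) x))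
    (hrv : ContDiff ℝ 2 (fun x => r x * deriv (deriv v) x))
    (husol : IsSol4 r p q u) (hvsol : IsSol4 r p q v)
    (hic : FundIC r q a u v)
    (hb : a < b) (hbz : deriv (tauHat r q u v) b = 0)
    (hbmin : ∀ x ∈ Ioo a b, deriv (tauHat r q u v) x ≠ 0)
    (hc : a < c) (hcz : deriv (tauHat r q u v) c = 0) (hcb : c ≠ b)
    (hcmin : ∀ x ∈ Ioo a c, deriv (tauHat r q u v) x = 0 → x = b) :
    deriv (deriv (tauHat r q u v)) b ≠ 0 ∧ b < c ∧
    ∃ x ∈ Ioc b c, sigmaHat u v x = 0 :=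
  sigma_vanishes_between_focal_points_general a b c r p q u v hpc hqc hrpos hppos hu hv hru hrv
    husol hvsol hic hb hbz hbmin hc hcz hcb
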